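/- Let μ be the standard Gaussian measure on ℝ^n and f : ℝ^n → ℝ be a bounded measurable function. Then the map h ↦ ∫ f(w + h) dμ(w) is real-analytic on ℝ^n. -/

import Mathlib

/-!
Completing the square in the Gaussian density gives the Cameron–Martin identity
`∫ f (w + h) dμ(w) = exp (-‖h‖² / 2) * ∫ f x * exp ⟪x, h⟫ dμ(x)`. Since `f` is bounded and the
Gaussian has exponential moments of every order, expanding `exp ⟪x, h⟫` in its power series and
integrating term by term yields a power series in `h` with infinite radius of convergence.
-/

open MeasureTheory NormedSpace
open scoped Nat ENNReal NNReal RealInnerProductSpace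

variable {E : Type*} [NormedAddCommGroup E]

section ExpMoments

variable [MeasurableSpace E] {μ : Measure E} {g : E → ℝ}

def HasExpMoments (μ : Measure E) (g : E → ℝ) : Prop :=
  ∀ r : ℝ, Integrable (fun x => g x * Real.exp (r * ‖x‖)) μ

lemma HasExpMoments.integrable (hg : HasExpMoments μ g) : Integrable g μ := by
  simpa using hg 0

end ExpMoments

variable [InnerProductSpace ℝ E]

noncomputable def expInnerSeries (x : E) : FormalMultilinearSeries ℝ E ℝ :=
  (expSeries ℝ ℝ).compContinuousLinearMap (innerSL ℝ x)

lemma expInnerSeries_apply_diag (x y : E) (k : ℕ) :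
    expInnerSeries x k (fun _ => y) = ⟪x, y⟫ ^ k / k ! := by
  rw [expInnerSeries, FormalMultilinearSeries.compContinuousLinearMap_apply, Function.comp_def]
  simp only [innerSL_apply_apply, expSeries_apply_eq, smul_eq_mul, div_eq_inv_mul]

lemma norm_expInnerSeries_le (x : E) (k : ℕ) : ‖expInnerSeries x k‖ ≤ ‖x‖ ^ k / k ! :=
  calc ‖expInnerSeries x k‖ ≤ ‖expSeries ℝ ℝ k‖ * ∏ _ : Fin k, ‖innerSL ℝ x‖ :=
        ContinuousMultilinearMap.norm_compContinuousLinearMap_le _ _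
    _ = ‖x‖ ^ k / k ! := by
        simp [expSeries, norm_smul, ContinuousMultilinearMap.norm_mkPiAlgebraFin, div_eq_inv_mul]

lemma norm_expInnerSeries_mul_pow_le (x : E) {r : ℝ} (hr : 0 ≤ r) (k : ℕ) :
    ‖expInnerSeries x k‖ * r ^ k ≤ Real.exp (r * ‖x‖) :=
  calc ‖expInnerSeries x k‖ * r ^ k ≤ ‖x‖ ^ k / k ! * r ^ k := by
        gcongr; exact norm_expInnerSeries_le x k
    _ = (r * ‖x‖) ^ k / k ! := by ring
    _ ≤ Real.exp (r * ‖x‖) := Real.pow_div_factorial_le_exp _ (by positivity) k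

lemma continuous_expInnerSeries (k : ℕ) : Continuous fun x : E => expInnerSeries x k :=
  ((ContinuousMultilinearMap.compContinuousLinearMapContinuousMultilinear ℝ _ _ ℝ).cont.comp
    (continuous_pi fun _ => (innerSL ℝ).continuous)).clm_apply
      (continuous_const (y := expSeries ℝ ℝ k))

section Laplace

variable [MeasurableSpace E] {μ : Measure E} {g : E → ℝ}

noncomputable def laplaceSeries (μ : Measure E) (g : E → ℝ) : FormalMultilinearSeries ℝ E ℝ :=
  fun k => ∫ x, g x • expInnerSeries x k ∂μ

lemma integrable_smul_expInnerSeries [BorelSpace E] [SecondCountableTopology E]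
    (hg : HasExpMoments μ g) (k : ℕ) :
    Integrable (fun x => g x • expInnerSeries x k) μ := by
  refine (hg 1).norm.mono' (hg.integrable.aestronglyMeasurable.smul
    (continuous_expInnerSeries k).aestronglyMeasurable) (ae_of_all _ fun x => ?_)
  simpa [norm_smul, abs_mul] using
    mul_le_mul_of_nonneg_left (norm_expInnerSeries_mul_pow_le x zero_le_one k) (abs_nonneg (g x))

lemma norm_laplaceSeries_mul_pow_le (hg : HasExpMoments μ g) (r : ℝ≥0) (k : ℕ) :
    ‖laplaceSeries μ g k‖ * (r : ℝ) ^ k ≤ ∫ x, ‖g x * Real.exp (r * ‖x‖)‖ ∂μ := by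
  have hr : (0 : ℝ) ≤ (r : ℝ) ^ k := by positivity
  rw [laplaceSeries, ← Real.norm_of_nonneg hr, mul_comm, ← norm_smul, ← integral_smul]
  refine norm_integral_le_of_norm_le (hg r).norm (ae_of_all _ fun x => ?_)
  rw [norm_smul, norm_smul, norm_mul, Real.norm_of_nonneg hr,
    Real.norm_of_nonneg (Real.exp_nonneg _)]
  calc (r : ℝ) ^ k * (‖g x‖ * ‖expInnerSeries x k‖)
      = ‖g x‖ * (‖expInnerSeries x k‖ * (r : ℝ) ^ k) := by ring
    _ ≤ ‖g x‖ * Real.exp (r * ‖x‖) := by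
      gcongr; exact norm_expInnerSeries_mul_pow_le x r.coe_nonneg k

lemma radius_laplaceSeries (hg : HasExpMoments μ g) : (laplaceSeries μ g).radius = ⊤ :=
  ENNReal.eq_top_of_forall_nnreal_le fun r =>
    (laplaceSeries μ g).le_radius_of_bound _ (norm_laplaceSeries_mul_pow_le hg r)

lemma hasSum_laplaceSeries [BorelSpace E] [SecondCountableTopology E]
    (hg : HasExpMoments μ g) (y : E) :
    HasSum (fun k => laplaceSeries μ g k fun _ => y) (∫ x, g x * Real.exp ⟪x, y⟫ ∂μ) := by
  have hexp (t : ℝ) : HasSum (fun k => t ^ k / k !) (Real.exp t) := by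
    simpa [Real.exp_eq_exp_ℝ] using expSeries_div_hasSum_exp t
  have hterm (k : ℕ) :
      (laplaceSeries μ g k fun _ => y) = ∫ x, g x * (⟪x, y⟫ ^ k / k !) ∂μ := by
    simp only [laplaceSeries, ContinuousMultilinearMap.integral_apply
      (integrable_smul_expInnerSeries hg k), smul_apply, expInnerSeries_apply_diag, smul_eq_mul]
  have hbound (k : ℕ) (x : E) :
      ‖g x * (⟪x, y⟫ ^ k / k !)‖ ≤ ‖g x‖ * ((‖y‖ * ‖x‖) ^ k / k !) := by
    rw [norm_mul, norm_div, norm_pow, RCLike.norm_natCast, real_inner_comm]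
    gcongr
    exact abs_real_inner_le_norm y x
  simp only [hterm]
  refine hasSum_integral_of_dominated_convergence (fun k x => ‖g x‖ * ((‖y‖ * ‖x‖) ^ k / k !))
    (fun k => ?_) (fun k => ae_of_all _ (hbound k))
    (ae_of_all _ fun x => ((hexp _).mul_left _).summable) ?_
    (ae_of_all _ fun x => (hexp _).mul_left _)
  · exact hg.integrable.aestronglyMeasurable.mul (by fun_prop : Continuous _).aestronglyMeasurable
  · simp_rw [((hexp _).mul_left _).tsum_eq]
    simpa [norm_mul] using (hg ‖y‖).norm

theorem hasFPowerSeriesOnBall_integral_mul_exp_inner [BorelSpace E] [SecondCountableTopology E]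
    (hg : HasExpMoments μ g) :
    HasFPowerSeriesOnBall (fun y => ∫ x, g x * Real.exp ⟪x, y⟫ ∂μ) (laplaceSeries μ g) 0 ⊤ where
  r_le := (radius_laplaceSeries hg).ge
  r_pos := ENNReal.zero_lt_top
  hasSum {y} _ := by simpa using hasSum_laplaceSeries hg y

theorem analyticOnNhd_integral_mul_exp_inner [BorelSpace E] [SecondCountableTopology E]
    (hg : HasExpMoments μ g) :
    AnalyticOnNhd ℝ (fun y => ∫ x, g x * Real.exp ⟪x, y⟫ ∂μ) Set.univ :=
  fun y _ => (hasFPowerSeriesOnBall_integral_mul_exp_inner hg).analyticAt_of_mem (by simp)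

end Laplace

theorem analyticOnNhd_exp_neg_norm_sq_div_two :
    AnalyticOnNhd ℝ (fun h : E => Real.exp (-‖h‖ ^ 2 / 2)) Set.univ := by
  intro h _
  simp_rw [← real_inner_self_eq_norm_sq]
  have hsq : AnalyticAt ℝ (fun h : E => innerSL ℝ h h) h :=
    (innerSL ℝ).analyticAt_bilinear (h, h) |>.comp₂ analyticAt_id analyticAt_id
  exact analyticAt_rexp.comp hsq.neg.div_const

lemma exp_neg_norm_sub_sq_div_two (x h : E) :
    Real.exp (-‖x - h‖ ^ 2 / 2) =
      Real.exp (-‖h‖ ^ 2 / 2) * Real.exp ⟪x, h⟫ * Real.exp (-‖x‖ ^ 2 / 2) := by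
  rw [← Real.exp_add, ← Real.exp_add, norm_sub_sq_real]
  ring_nf

section Gaussian

variable [MeasurableSpace E] [BorelSpace E]

noncomputable def gaussianMeasure (ν : Measure E) (c : ℝ) : Measure E :=
  ν.withDensity fun x => ENNReal.ofReal (c * Real.exp (-‖x‖ ^ 2 / 2))

theorem integral_comp_add_right_gaussianMeasure {ν : Measure E} [ν.IsAddRightInvariant]
    {c : ℝ} (hc : 0 ≤ c) (f : E → ℝ) (h : E) :
    ∫ w, f (w + h) ∂gaussianMeasure ν c =
      Real.exp (-‖h‖ ^ 2 / 2) * ∫ x, f x * Real.exp ⟪x, h⟫ ∂gaussianMeasure ν c := by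
  have hmeas : Measurable fun x : E => ENNReal.ofReal (c * Real.exp (-‖x‖ ^ 2 / 2)) := by fun_prop
  have hfin : ∀ᵐ x ∂ν, ENNReal.ofReal (c * Real.exp (-‖x‖ ^ 2 / 2)) < ∞ :=
    ae_of_all _ fun _ => ENNReal.ofReal_lt_top
  have hdens (x : E) : (ENNReal.ofReal (c * Real.exp (-‖x‖ ^ 2 / 2))).toReal =
      c * Real.exp (-‖x‖ ^ 2 / 2) := ENNReal.toReal_ofReal (by positivity)
  simp only [gaussianMeasure, integral_withDensity_eq_integral_toReal_smul hmeas hfin, smul_eq_mul,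
    hdens]
  rw [← integral_sub_right_eq_self _ h, ← integral_const_mul]
  refine integral_congr_ae (ae_of_all _ fun x => ?_)
  dsimp only
  rw [sub_add_cancel, exp_neg_norm_sub_sq_div_two]
  ring

theorem integrable_exp_neg_mul_norm_sq [FiniteDimensional ℝ E] {b : ℝ} (hb : 0 < b) :
    Integrable fun x : E => Real.exp (-b * ‖x‖ ^ 2) := by
  have h := (GaussianFourier.integrable_cexp_neg_mul_sq_norm_add
      (V := E) (b := (b : ℂ)) (by simpa using hb) 0 0).norm
  refine h.congr (ae_of_all _ fun x => ?_)
  simp [Complex.norm_exp, ← Complex.ofReal_pow]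

lemma exp_neg_sq_div_two_mul_exp_le (r t : ℝ) :
    Real.exp (-t ^ 2 / 2) * Real.exp (r * t) ≤ Real.exp (r ^ 2) * Real.exp (-(1 / 4) * t ^ 2) := by
  rw [← Real.exp_add, ← Real.exp_add, Real.exp_le_exp]
  nlinarith [sq_nonneg (r - t / 2)]

theorem integrable_exp_mul_norm_gaussianMeasure [FiniteDimensional ℝ E] {c : ℝ}
    (hc : 0 ≤ c) (r : ℝ) :
    Integrable (fun x => Real.exp (r * ‖x‖)) (gaussianMeasure (volume : Measure E) c) := by
  have hmeas : Measurable fun x : E => ENNReal.ofReal (c * Real.exp (-‖x‖ ^ 2 / 2)) := by fun_prop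
  rw [gaussianMeasure,
    integrable_withDensity_iff_integrable_smul' hmeas (ae_of_all _ fun _ => ENNReal.ofReal_lt_top)]
  refine ((integrable_exp_neg_mul_norm_sq (E := E) (b := 1 / 4) (by norm_num)).const_mul
    (c * Real.exp (r ^ 2))).mono' (by fun_prop) (ae_of_all _ fun x => ?_)
  rw [smul_eq_mul, ENNReal.toReal_ofReal (by positivity), Real.norm_of_nonneg (by positivity),
    mul_assoc, mul_assoc]
  exact mul_le_mul_of_nonneg_left (exp_neg_sq_div_two_mul_exp_le r ‖x‖) hc

end Gaussian

/-- The convolution of a bounded measurable function with the standard Gaussian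
measure on `ℝ^n` is real-analytic. -/
theorem analytic_gaussian_convolution
    (n : ℕ)
    (μ : Measure (EuclideanSpace ℝ (Fin n)))
    (hμ : μ = (volume : Measure (EuclideanSpace ℝ (Fin n))).withDensity
        (fun x => ENNReal.ofReal ((2 * Real.pi) ^ (-(n : ℝ) / 2) *
          Real.exp (-‖x‖ ^ 2 / 2))))
    (f : EuclideanSpace ℝ (Fin n) → ℝ)
    (hf : Measurable f) (C : ℝ) (hbd : ∀ x, |f x| ≤ C) :
    AnalyticOnNhd ℝ (fun h => ∫ w, f (w + h) ∂μ) Set.univ := by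
  have hc : 0 ≤ (2 * Real.pi) ^ (-(n : ℝ) / 2) := by positivity
  have hmoments : HasExpMoments μ f := fun r => by
    rw [hμ]
    exact (integrable_exp_mul_norm_gaussianMeasure hc r).bdd_mul hf.aestronglyMeasurable
      (ae_of_all _ hbd)
  have hshift (h : EuclideanSpace ℝ (Fin n)) :
      ∫ w, f (w + h) ∂μ = Real.exp (-‖h‖ ^ 2 / 2) * ∫ x, f x * Real.exp ⟪x, h⟫ ∂μ := by
    rw [hμ]
    exact integral_comp_add_right_gaussianMeasure hc f h
  simp_rw [hshift]
  exact analyticOnNhd_exp_neg_norm_sq_div_two.mul (analyticOnNhd_integral_mul_exp_inner hmoments)
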